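/- arXiv:1106.0735 — 3 statements merged into one kernel-verified Lean document; each statement's English description precedes it below -/
import Mathlib

section
/- Consider queues U^k_m(t) for routes k = 1,...,K and hop indices m = 0,...,H_k, evolving as U^k_m(t+1) ≤ max(U^k_m(t) - μ^k_{m,m+1}(t), 0) + μ^k_{m-1,m}(t), where internal hop rates μ^k_{m,m+1}(t) ∈ {0,1} for m ≥ 0, the source arrival satisfies μ^k_{-1,0}(t) ≤ μ_M, the admission rule sets μ^k_{-1,0}(t) = 0 whenever U^k_0(t) > V, and the scheduler sets μ^k_{m-1,m}(t) = 0 whenever U^k_{m-1}(t) ≤ U^k_m(t) (for m ≥ 1). If all queues start at 0, then U^k_m(t) ≤ μ_M + V for all m, k, t. -/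
/-- Proposition 2: in the elastic fixed-routing model, integer route queues
`U k m t` (with hop rates in `{0,1}`, source admission at most `μM` per slot and
shut off when `U k 0 t > V`, and back-pressure disabling hop `(m-1,m)` when
`U k (m-1) t ≤ U k m t`) are deterministically bounded by `μM + V`.
Here `μ k m t` denotes the rate of hop `(m, m+1)` on route `k`, and `a k t`
denotes the admitted arrival rate `μ^k_{-1,0}(t)`. -/
theorem stmt5 (K : ℕ) (H : Fin K → ℕ) (U : Fin K → ℕ → ℕ → ℕ)
    (μ : Fin K → ℕ → ℕ → ℕ) (a : Fin K → ℕ → ℕ) (μM : ℕ) (V : ℝ) (hV : 0 ≤ V)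
    (hrate : ∀ k m t, m ≤ H k → μ k m t ≤ 1)
    (haM : ∀ k t, a k t ≤ μM)
    (hadm : ∀ k t, (U k 0 t : ℝ) > V → a k t = 0)
    (hsched : ∀ k m t, 1 ≤ m → m ≤ H k → U k (m - 1) t ≤ U k m t → μ k (m - 1) t = 0)
    (hdyn0 : ∀ k t, U k 0 (t + 1) ≤ U k 0 t - μ k 0 t + a k t)
    (hdyn : ∀ k m t, 1 ≤ m → m ≤ H k → U k m (t + 1) ≤ U k m t - μ k m t + μ k (m - 1) t)
    (hinit : ∀ k m, U k m 0 = 0) :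
    ∀ k m t, m ≤ H k → (U k m t : ℝ) ≤ μM + V := by
  intro k m t
  induction t generalizing m with
  | zero =>
    intro hm
    simp [hinit]
    positivity
  | succ t ih =>
    intro hm
    cases m with
    | zero =>
      by_cases hc : (U k 0 t : ℝ) > V
      · have h0 := hadm k t hc
        have hd := hdyn0 k t
        rw [h0] at hd
        have h1 : U k 0 (t + 1) ≤ U k 0 t := by omega
        calc (U k 0 (t + 1) : ℝ) ≤ U k 0 t := by exact_mod_cast h1
          _ ≤ μM + V := ih 0 hm
      · push_neg at hc
        have hd := hdyn0 k t
        have h1 : U k 0 (t + 1) ≤ U k 0 t + a k t := by omega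
        have h2 : (U k 0 (t + 1) : ℝ) ≤ (U k 0 t : ℝ) + a k t := by exact_mod_cast h1
        have h3 : (a k t : ℝ) ≤ μM := by exact_mod_cast haM k t
        linarith
    | succ n =>
      have hd := hdyn k (n + 1) t (by omega) hm
      simp only [Nat.add_sub_cancel] at hd
      by_cases hc : U k n t ≤ U k (n + 1) t
      · have h0 := hsched k (n + 1) t (by omega) hm (by simpa using hc)
        simp only [Nat.add_sub_cancel] at h0
        rw [h0] at hd
        have h1 : U k (n + 1) (t + 1) ≤ U k (n + 1) t := by omega
        calc (U k (n + 1) (t + 1) : ℝ) ≤ U k (n + 1) t := by exact_mod_cast h1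
          _ ≤ μM + V := ih (n + 1) hm
      · push_neg at hc
        have hr : μ k n t ≤ 1 := hrate k n t (by omega)
        have h1 : U k (n + 1) (t + 1) ≤ U k n t := by omega
        calc (U k (n + 1) (t + 1) : ℝ) ≤ U k n t := by exact_mod_cast h1
          _ ≤ μM + V := ih n (by omega)
end

section
/- Consider the source queue U(t) with U(0)=0, U(t+1) ≤ max(U(t) - μ(t), 0) + a(t), where the per-slot admitted arrival satisfies a(t) ≤ min(W(t) + E(t), μ_M) for transport-layer backlog W(t) and exogenous arrival E(t), and the admission rule sets a(t) = 0 whenever U(t) > q - μ_M (with q ≥ μ_M). Then U(t) ≤ q for all t. -/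
/-- Variant of Proposition 1 for arbitrary transport-layer arrivals (Section 5):
the admitted rate is capped by `min(W(t) + E(t), μ_M)` and shut off whenever
`U(t) > q - μ_M`; the source queue is then deterministically bounded by `q`. -/
theorem stmt12 (U μ a W E : ℕ → ℝ) (μM q : ℝ) (hμM : 0 ≤ μM) (hq : μM ≤ q)
    (hμ : ∀ t, 0 ≤ μ t) (ha : ∀ t, 0 ≤ a t)
    (hW : ∀ t, 0 ≤ W t) (hE : ∀ t, 0 ≤ E t)
    (hacap : ∀ t, a t ≤ min (W t + E t) μM)
    (hU0 : U 0 = 0)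
    (hdyn : ∀ t, U (t + 1) ≤ max (U t - μ t) 0 + a t)
    (hctrl : ∀ t, U t > q - μM → a t = 0) :
    ∀ t, U t ≤ q := by
  intro t
  induction t with
  | zero => simp [hU0]; linarith
  | succ n ih =>
    have hd := hdyn n
    by_cases h : U n > q - μM
    · have := hctrl n h
      have : max (U n - μ n) 0 ≤ max q 0 :=
        max_le_max (by linarith [hμ n]) le_rfl
      have hq0 : max q 0 = q := max_eq_left (by linarith)
      calc U (n+1) ≤ max (U n - μ n) 0 + a n := hd
        _ = max (U n - μ n) 0 := by rw [hctrl n h]; ring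
        _ ≤ q := by rw [hq0] at this; exact this
    · push_neg at h
      have h1 : max (U n - μ n) 0 ≤ max (q - μM) 0 :=
        max_le_max (by linarith [hμ n]) le_rfl
      have h2 : max (q - μM) 0 = q - μM := max_eq_left (by linarith)
      have h3 : a n ≤ μM := le_trans (hacap n) (min_le_right _ _)
      linarith [hd, h1.trans_eq h2]
end

section
/- Consider route queues U^k_m(t) as in the elastic model but where the admission rule sets the total admitted rate Σ_k μ^k_{-1,0}(t) ≤ μ_M per slot and route k receives positive admission only if U^k_0(t) - Y_p(t) + ρ_k Σ_l Y_l(t)·1{route k passes through l} ≤ 0 with the auxiliary queue Y_p(t) bounded above by V + μ_M. If internal hop rates are in {0,1}, the back-pressure rule disables hop (m-1,m) when U^k_{m-1}(t) ≤ U^k_m(t), and all queues start at 0, then U^k_m(t) ≤ 2μ_M + V for all m, k, t. -/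
/-- Proposition 3 (elastic algorithm with arbitrary transport-layer arrivals):
integer route queues with total admitted rate at most `μM` per slot, where route `k`
receives positive admission only if
`U^k_0(t) - Y_p(t) + ρ_k Σ_l Y_l(t)·1{route k passes through l} ≤ 0` and the
auxiliary queue satisfies `Y_p(t) ≤ V + μM`, with `{0,1}` hop rates and the
back-pressure rule disabling hop `(m-1,m)` when `U^k_{m-1}(t) ≤ U^k_m(t)`, are
deterministically bounded by `2 μM + V`.
Here `μ k m t` is the rate of hop `(m, m+1)` and `a k t = μ^k_{-1,0}(t)`. -/
theorem stmt13 (K : ℕ) {ι : Type*} [Fintype ι] (H : Fin K → ℕ)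
    (U : Fin K → ℕ → ℕ → ℕ) (μ : Fin K → ℕ → ℕ → ℕ) (a : Fin K → ℕ → ℕ)
    (μM : ℕ) (V : ℝ) (hV : 0 ≤ V)
    (ρ : Fin K → ℝ) (hρ : ∀ k, 0 ≤ ρ k)
    (pass : Fin K → ι → Prop) [∀ k, DecidablePred (pass k)]
    (Yp : ℕ → ℝ) (Yl : ι → ℕ → ℝ)
    (hYl : ∀ l t, 0 ≤ Yl l t)
    (hYp : ∀ t, Yp t ≤ V + μM)
    (htot : ∀ t, ∑ k, a k t ≤ μM)
    (hadm : ∀ k t, 0 < a k t →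
      (U k 0 t : ℝ) - Yp t + ρ k * ∑ l, (if pass k l then Yl l t else 0) ≤ 0)
    (hrate : ∀ k m t, m ≤ H k → μ k m t ≤ 1)
    (hsched : ∀ k m t, 1 ≤ m → m ≤ H k → U k (m - 1) t ≤ U k m t → μ k (m - 1) t = 0)
    (hdyn0 : ∀ k t, U k 0 (t + 1) ≤ U k 0 t - μ k 0 t + a k t)
    (hdyn : ∀ k m t, 1 ≤ m → m ≤ H k → U k m (t + 1) ≤ U k m t - μ k m t + μ k (m - 1) t)
    (hinit : ∀ k m, U k m 0 = 0) :
    ∀ k m t, m ≤ H k → (U k m t : ℝ) ≤ 2 * μM + V := by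
  intro k m t
  induction t generalizing m with
  | zero =>
    intro _
    simp [hinit]
    positivity
  | succ t ih =>
    intro hm
    match m with
    | 0 =>
      have h1 : U k 0 (t + 1) ≤ U k 0 t + a k t := (hdyn0 k t).trans (by omega)
      by_cases ha : a k t = 0
      · have : (U k 0 (t + 1) : ℝ) ≤ (U k 0 t : ℝ) := by
          exact_mod_cast (by omega : U k 0 (t + 1) ≤ U k 0 t)
        exact this.trans (ih 0 hm)
      · have hpos : 0 < a k t := Nat.pos_of_ne_zero ha
        have hA := hadm k t hpos
        have hsum : (0:ℝ) ≤ ρ k * ∑ l, (if pass k l then Yl l t else 0) := by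
          apply mul_nonneg (hρ k)
          apply Finset.sum_nonneg
          intro l _
          split
          · exact hYl l t
          · exact le_rfl
        have hU0 : (U k 0 t : ℝ) ≤ Yp t := by linarith
        have haM : a k t ≤ μM := le_trans (Finset.single_le_sum (f := fun k => a k t) (fun _ _ => Nat.zero_le _) (Finset.mem_univ k)) (htot t)
        have : (U k 0 (t + 1) : ℝ) ≤ (U k 0 t : ℝ) + a k t := by exact_mod_cast h1
        have hYpt := hYp t
        have : (U k 0 (t + 1) : ℝ) ≤ V + μM + μM := by
          have : (a k t : ℝ) ≤ μM := by exact_mod_cast haM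
          linarith
        linarith
    | n + 1 =>
      have hd := hdyn k (n + 1) t (by omega) hm
      simp only [Nat.add_sub_cancel] at hd
      by_cases hμ : μ k n t = 0
      · have : U k (n + 1) (t + 1) ≤ U k (n + 1) t := by
          simpa [hμ] using hd.trans (by omega : U k (n+1) t - μ k (n+1) t + μ k n t ≤ U k (n+1) t + μ k n t)
        have : (U k (n + 1) (t + 1) : ℝ) ≤ (U k (n + 1) t : ℝ) := by exact_mod_cast this
        exact this.trans (ih (n + 1) hm)
      · have hlt : U k (n + 1) t < U k n t := by
          by_contra hc
          have hs := hsched k (n + 1) t (by omega) hm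
          simp only [Nat.add_sub_cancel] at hs
          exact hμ (hs (by omega))
        have hr : μ k n t ≤ 1 := hrate k n t (by omega)
        have : U k (n + 1) (t + 1) ≤ U k n t := by omega
        have : (U k (n + 1) (t + 1) : ℝ) ≤ (U k n t : ℝ) := by exact_mod_cast this
        exact this.trans (ih n (by omega))
end
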